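/- arXiv:2205.14235 — 11 statements merged into one kernel-verified Lean document; each statement's English description precedes it below -/
import Mathlib

section
/- Let A be a freezing set for the digital image (X, κ) and let F : (X, κ) → (Y, λ) be an isomorphism of digital images. Then F(A) is a freezing set for (Y, λ). -/
/-- A κ-path of some length m in S from a to b (consecutive points equal or adjacent). -/
def DigPath {α : Type*} (κ : α → α → Prop) (S : Set α) (a b : α) : Prop :=
  ∃ (m : ℕ) (r : ℕ → α), r 0 = a ∧ r m = b ∧ (∀ k, k ≤ m → r k ∈ S) ∧
    ∀ k, k < m → r k = r (k + 1) ∨ κ (r k) (r (k + 1))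

/-- S is κ-connected: any two points of S are joined by a κ-path in S. -/
def DigConnected {α : Type*} (κ : α → α → Prop) (S : Set α) : Prop :=
  ∀ a ∈ S, ∀ b ∈ S, DigPath κ S a b

/-- (κ,λ)-continuity via the adjacency characterization. -/
def DigCont {α β : Type*} (κ : α → α → Prop) (lam : β → β → Prop)
    (X : Set α) (f : α → β) : Prop :=
  ∀ x ∈ X, ∀ y ∈ X, κ x y → f x = f y ∨ lam (f x) (f y)

/-- A ⊆ X is a freezing set for (X, κ). -/
def FreezingSet {α : Type*} (κ : α → α → Prop) (X A : Set α) : Prop :=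
  A ⊆ X ∧ ∀ g : α → α, (∀ x ∈ X, g x ∈ X) → DigCont κ κ X g →
    (∀ a ∈ A, g a = a) → ∀ x ∈ X, g x = x

/-- The c_u adjacency on ℤⁿ: distinct points differing by exactly 1 in at most u
coordinates and equal in all others. -/
def cAdj (n u : ℕ) (x y : Fin n → ℤ) : Prop :=
  x ≠ y ∧ (∀ i, x i = y i ∨ |x i - y i| = 1) ∧
    (Finset.univ.filter (fun i => x i ≠ y i)).card ≤ u

/-- The boundary of A ⊆ ℤⁿ: points of A that are c_1-adjacent to a point outside A. -/
def Bd (n : ℕ) (A : Set (Fin n → ℤ)) : Set (Fin n → ℤ) :=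
  {x ∈ A | ∃ y, y ∉ A ∧ cAdj n 1 x y}

/-!
Conjugating a continuous self-map `g` of `Y` by the isomorphism gives the continuous self-map
`G ∘ g ∘ F` of `X`, which fixes `A` whenever `g` fixes `F '' A`. Since `A` freezes `X`, it is the
identity on `X`; applying `F` shows that `g` is the identity on `Y`.
-/

section

variable {α β γ : Type*} {κ : α → α → Prop} {μ : β → β → Prop} {ν : γ → γ → Prop}
  {X : Set α} {Y : Set β}

theorem DigCont.comp {f : α → β} {g : β → γ} (hg : DigCont μ ν Y g) (hf : DigCont κ μ X f)
    (hfXY : Set.MapsTo f X Y) : DigCont κ ν X (g ∘ f) := by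
  intro x hx x' hx' hxx'
  rcases hf x hx x' hx' hxx' with heq | hadj
  · exact Or.inl (congrArg g heq)
  · exact hg _ (hfXY hx) _ (hfXY hx') hadj

theorem FreezingSet.image_of_iso {A : Set α} {F : α → β} {G : β → α}
    (hFXY : Set.MapsTo F X Y) (hGYX : Set.MapsTo G Y X)
    (hF : DigCont κ μ X F) (hG : DigCont μ κ Y G)
    (hGF : Set.LeftInvOn G F X) (hFG : Set.LeftInvOn F G Y) (hA : FreezingSet κ X A) :
    FreezingSet μ Y (F '' A) := by
  obtain ⟨hAX, hfreeze⟩ := hA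
  refine ⟨(Set.image_mono hAX).trans hFXY.image_subset, fun g hgY hg hfix y hy => ?_⟩
  have hgF : Set.MapsTo (g ∘ F) X Y := Set.MapsTo.comp hgY hFXY
  have hconj : ∀ x ∈ X, G (g (F x)) = x :=
    hfreeze (G ∘ g ∘ F) (hGYX.comp hgF) (hG.comp (hg.comp hF hFXY) hgF)
      (fun a ha => by simp only [Function.comp, hfix _ (Set.mem_image_of_mem F ha), hGF (hAX ha)])
  calc g y = F (G (g (F (G y)))) := by rw [hFG hy, hFG (hgY y hy)]
    _ = y := by rw [hconj _ (hGYX hy), hFG hy]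

end

/-- A freezing set is carried to a freezing set by an isomorphism of digital images. -/
theorem freezingSet_of_iso {n m : ℕ}
    (κ : (Fin n → ℤ) → (Fin n → ℤ) → Prop) (lam : (Fin m → ℤ) → (Fin m → ℤ) → Prop)
    (X : Set (Fin n → ℤ)) (Y : Set (Fin m → ℤ)) (A : Set (Fin n → ℤ))
    (F : (Fin n → ℤ) → (Fin m → ℤ)) (G : (Fin m → ℤ) → (Fin n → ℤ))
    (hFXY : ∀ x ∈ X, F x ∈ Y) (hGYX : ∀ y ∈ Y, G y ∈ X)
    (hF : DigCont κ lam X F) (hG : DigCont lam κ Y G)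
    (hGF : ∀ x ∈ X, G (F x) = x) (hFG : ∀ y ∈ Y, F (G y) = y)
    (hA : FreezingSet κ X A) :
    FreezingSet lam Y (F '' A) := by
  exact FreezingSet.image_of_iso hFXY hGYX hF hG hGF hFG hA
end

section
/- Let (X, κ) be a digital image and f ∈ C(X, κ) a continuous self-map. Suppose x, x' are fixed points of f such that there is a unique shortest κ-path P in X from x to x'. Then every point of P is a fixed point of f. -/
/-- A κ-path of length m in X from x to x', indexed by Fin (m+1). -/
def FinPath {α : Type*} (κ : α → α → Prop) (X : Set α) (x x' : α) (m : ℕ)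
    (r : Fin (m + 1) → α) : Prop :=
  r 0 = x ∧ r (Fin.last m) = x' ∧ (∀ k, r k ∈ X) ∧
    ∀ k : Fin m, r k.castSucc = r k.succ ∨ κ (r k.castSucc) (r k.succ)

theorem FinPath.map {α β : Type*} {κ : α → α → Prop} {lam : β → β → Prop} {X : Set α}
    {Y : Set β} {f : α → β} (hfX : Set.MapsTo f X Y) (hf : DigCont κ lam X f) {x x' : α}
    {m : ℕ} {r : Fin (m + 1) → α} (hr : FinPath κ X x x' m r) :
    FinPath lam Y (f x) (f x') m (f ∘ r) := by
  obtain ⟨h0, hlast, hmem, hstep⟩ := hr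
  refine ⟨congrArg f h0, congrArg f hlast, fun k => hfX (hmem k), fun k => ?_⟩
  rcases hstep k with heq | hadj
  · exact Or.inl (congrArg f heq)
  · exact hf _ (hmem _) _ (hmem _) hadj

theorem uniqueShortestPath_fixed_general {α : Type*} (κ : α → α → Prop) (X : Set α)
    (f : α → α) (hfX : ∀ x ∈ X, f x ∈ X) (hf : DigCont κ κ X f)
    (x x' : α) (hfx : f x = x) (hfx' : f x' = x')
    (m : ℕ) (r : Fin (m + 1) → α) (hr : FinPath κ X x x' m r)
    (huniq : ∀ r' : Fin (m + 1) → α, FinPath κ X x x' m r' → r' = r) :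
    ∀ k, f (r k) = r k := by
  have hfr : FinPath κ X (f x) (f x') m (f ∘ r) := hr.map (fun a ha => hfX a ha) hf
  rw [hfx, hfx'] at hfr
  exact congrFun (huniq _ hfr)

/-- If x, x' are fixed points of a continuous self-map and there is a unique shortest
κ-path P from x to x', then every point of P is fixed. -/
theorem uniqueShortestPath_fixed {α : Type*} (κ : α → α → Prop) (X : Set α)
    (f : α → α) (hfX : ∀ x ∈ X, f x ∈ X) (hf : DigCont κ κ X f)
    (x x' : α) (hx : x ∈ X) (hx' : x' ∈ X) (hfx : f x = x) (hfx' : f x' = x')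
    (m : ℕ) (r : Fin (m + 1) → α) (hr : FinPath κ X x x' m r)
    (hshort : ∀ m' < m, ¬∃ r' : Fin (m' + 1) → α, FinPath κ X x x' m' r')
    (huniq : ∀ r' : Fin (m + 1) → α, FinPath κ X x x' m r' → r' = r) :
    ∀ k, f (r k) = r k :=
  uniqueShortestPath_fixed_general κ X f hfX hf x x' hfx hfx' m r hr huniq
end

section
/- Let (X, c_u) ⊆ ℤⁿ be a digital image, 1 ≤ u ≤ n, let q, q' ∈ X with q c_u-adjacent to q', and let f ∈ C(X, c_u). If for some coordinate index i we have p_i(f(q)) > p_i(q) > p_i(q'), then p_i(f(q')) > p_i(q'). Similarly, if p_i(f(q)) < p_i(q) < p_i(q'), then p_i(f(q')) < p_i(q'). -/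
/-! Coordinates of c_u-adjacent points differ by at most 1, and c_u-continuity passes this to
the images. So if `q' i < q i < f q i`, then `q' i = q i - 1` and
`f q' i ≥ f q i - 1 ≥ q i > q' i`; the other case is the mirror image. -/

theorem cAdj.abs_sub_le_one {n u : ℕ} {x y : Fin n → ℤ} (h : cAdj n u x y) (i : Fin n) :
    |x i - y i| ≤ 1 :=
  (h.2.1 i).elim (fun hxy => by simp [hxy]) le_of_eq

theorem abs_sub_le_one_of_eq_or_cAdj {n u : ℕ} {x y : Fin n → ℤ} (h : x = y ∨ cAdj n u x y)
    (i : Fin n) : |x i - y i| ≤ 1 :=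
  h.elim (fun hxy => by simp [hxy]) (·.abs_sub_le_one i)

theorem c_u_pulling_general {n u : ℕ} (X : Set (Fin n → ℤ))
    (f : (Fin n → ℤ) → (Fin n → ℤ))
    (hf : DigCont (cAdj n u) (cAdj n u) X f)
    (q q' : Fin n → ℤ) (hq : q ∈ X) (hq' : q' ∈ X) (hadj : cAdj n u q q')
    (i : Fin n) :
    (f q i > q i → q i > q' i → f q' i > q' i) ∧
      (f q i < q i → q i < q' i → f q' i < q' i) := by
  have hq_i := hadj.abs_sub_le_one i
  have hf_i := abs_sub_le_one_of_eq_or_cAdj (hf q hq q' hq' hadj) i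
  rw [abs_le] at hq_i hf_i
  constructor <;> intro h₁ h₂ <;> omega

/-- Pulling lemma: a c_u-continuous map that moves a point also moves the point
behind it, coordinatewise. -/
theorem c_u_pulling {n u : ℕ} (hu1 : 1 ≤ u) (hun : u ≤ n) (X : Set (Fin n → ℤ))
    (f : (Fin n → ℤ) → (Fin n → ℤ)) (hfX : ∀ x ∈ X, f x ∈ X)
    (hf : DigCont (cAdj n u) (cAdj n u) X f)
    (q q' : Fin n → ℤ) (hq : q ∈ X) (hq' : q' ∈ X) (hadj : cAdj n u q q')
    (i : Fin n) :
    (f q i > q i → q i > q' i → f q' i > q' i) ∧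
      (f q i < q i → q i < q' i → f q' i < q' i) :=
  c_u_pulling_general X f hf q q' hq hq' hadj i
end

section
/- Let X = ∏_{i=1}^{3} [a_i, b_i] ∩ ℤ³ be a digital cube with b_i > a_i + 1 for all i, and let A = ∏_{i=1}^{3} {a_i, b_i} be its set of corners. Then A is a subset of every freezing set for (X, c_3). -/
/-- Boxer's close neighbour: `y ≠ x` and `N*(X, x) ⊆ N*(X, y)` for closed neighbourhoods `N*`. -/
def IsCloseNeighbor {α : Type*} (κ : α → α → Prop) (X : Set α) (x y : α) : Prop :=
  y ≠ x ∧ ∀ z ∈ X, (z = x ∨ κ x z) → z = y ∨ κ y z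

/-- Moving `x` onto its close neighbour `y` and fixing everything else is continuous and fixes
every point but `x`. -/
theorem mem_freezingSet_of_isCloseNeighbor {α : Type*} {κ : α → α → Prop}
    (hκ : ∀ x y, κ x y → κ y x) {X B : Set α} (hB : FreezingSet κ X B) {x y : α}
    (hx : x ∈ X) (hy : y ∈ X) (hxy : IsCloseNeighbor κ X x y) : x ∈ B := by
  classical
  obtain ⟨hyx, hnbr⟩ := hxy
  by_contra hxB
  set g : α → α := Function.update id x y
  have hmaps : ∀ z ∈ X, g z ∈ X := by
    intro z hz
    by_cases h : z = x
    · simpa [g, h] using hy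
    · simpa [g, h] using hz
  have hcont : DigCont κ κ X g := by
    intro z hz w hw hzw
    by_cases hzx : z = x <;> by_cases hwx : w = x
    · simp [g, hzx, hwx]
    · subst hzx
      simpa [g, hwx, eq_comm] using hnbr w hw (Or.inr hzw)
    · subst hwx
      simpa [g, hzx, eq_comm] using (hnbr z hz (Or.inr (hκ _ _ hzw))).imp_right (hκ _ _)
    · simp [g, hzx, hwx, hzw]
  have hfix : ∀ c ∈ B, g c = c := fun c hc => by
    simp [g, show c ≠ x from fun h => hxB (h ▸ hc)]
  exact hyx (by simpa [g] using hB.2 g hmaps hcont hfix x hx)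

theorem cAdj_symm (n u : ℕ) (x y : Fin n → ℤ) : cAdj n u x y → cAdj n u y x := by
  rintro ⟨hne, hcoord, hcard⟩
  refine ⟨hne.symm, fun i => ?_, ?_⟩
  · rw [abs_sub_comm, eq_comm]
    exact hcoord i
  · simpa only [ne_comm] using hcard

theorem cAdj_self_iff {n : ℕ} {x y : Fin n → ℤ} :
    cAdj n n x y ↔ x ≠ y ∧ ∀ i, |x i - y i| ≤ 1 := by
  have hcard : (Finset.univ.filter (fun i => x i ≠ y i)).card ≤ n :=
    (Finset.card_filter_le _ _).trans (by simp)
  have hcoord : ∀ i, (x i = y i ∨ |x i - y i| = 1) ↔ |x i - y i| ≤ 1 := fun i => by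
    rw [abs_le, abs_eq zero_le_one]
    omega
  simp only [cAdj, hcoord, hcard, and_true]

theorem eq_or_cAdj_self_iff {n : ℕ} {x y : Fin n → ℤ} :
    (y = x ∨ cAdj n n x y) ↔ ∀ i, |x i - y i| ≤ 1 := by
  rw [cAdj_self_iff]
  by_cases h : y = x
  · simp [h]
  · simp [h, Ne.symm h]

def inwardDiagonal {n : ℕ} (a q : Fin n → ℤ) : Fin n → ℤ :=
  fun i => if q i = a i then a i + 1 else q i - 1

section Corner

variable {n : ℕ} {a b q : Fin n → ℤ}

theorem inwardDiagonal_mem_box (hab : ∀ i, a i < b i) (hq : ∀ i, q i = a i ∨ q i = b i) :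
    inwardDiagonal a q ∈ {x | ∀ i, a i ≤ x i ∧ x i ≤ b i} := fun i => by
  have := hab i
  rcases hq i with h | h <;> simp only [inwardDiagonal] <;> split <;> omega

theorem isCloseNeighbor_inwardDiagonal [NeZero n] (hab : ∀ i, a i < b i)
    (hq : ∀ i, q i = a i ∨ q i = b i) :
    IsCloseNeighbor (cAdj n n) {x | ∀ i, a i ≤ x i ∧ x i ≤ b i} q (inwardDiagonal a q) := by
  refine ⟨fun h => ?_, fun z hz hqz => ?_⟩
  · have := congrFun h 0
    simp only [inwardDiagonal] at this
    split at this <;> omega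
  · rw [eq_or_cAdj_self_iff] at hqz ⊢
    intro i
    have := hz i
    have := hab i
    have := abs_le.mp (hqz i)
    rw [abs_le]
    rcases hq i with h | h <;> simp only [inwardDiagonal] <;> split <;> omega

end Corner

/-- The corners of a 3-dimensional digital cube with all edges of length > 1 belong
to every freezing set for (X, c_3). -/
theorem corners_subset_freezingSet_c3 (a b : Fin 3 → ℤ) (hab : ∀ i, a i + 1 < b i)
    (X : Set (Fin 3 → ℤ)) (hX : X = {x | ∀ i, a i ≤ x i ∧ x i ≤ b i})
    (A : Set (Fin 3 → ℤ)) (hA : A = {x | ∀ i, x i = a i ∨ x i = b i})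
    (B : Set (Fin 3 → ℤ)) (hB : FreezingSet (cAdj 3 3) X B) :
    A ⊆ B := by
  subst hX hA
  intro q hq
  have hab' : ∀ i, a i < b i := fun i => (lt_add_one _).trans (hab i)
  have hqX : q ∈ {x | ∀ i, a i ≤ x i ∧ x i ≤ b i} := fun i => by
    have := hab i; rcases hq i with h | h <;> omega
  exact mem_freezingSet_of_isCloseNeighbor (cAdj_symm 3 3) hB hqX
    (inwardDiagonal_mem_box hab' hq) (isCloseNeighbor_inwardDiagonal hab' hq)
end

section
/- Each corner point a of the digital cube X = ∏_{i=1}^{3} [0, b_i] ∩ ℤ³ with b_i ≥ 2 for all i has a close c_3-neighbor in X, namely the unique point of X differing from a by exactly 1 in every coordinate. -/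
/-!
Everything happens coordinatewise. In `[0, b]`, the point one step inside from an endpoint is
the only point at distance exactly `1` from it, and it is within distance `1` of every point
of `[0, b]` that is within distance `1` of the endpoint. Since `c_n`-adjacency in `ℤⁿ` just means
distinct points at sup-distance `1`, taking this step in every coordinate of the corner gives the
close neighbour.
-/

/-- The integer one step inside `[0, b]` from the endpoint `t ∈ {0, b}`. -/
def inwardNeighbor (b t : ℤ) : ℤ := if t = 0 then 1 else b - 1

section inwardNeighbor

variable {b s t : ℤ}

theorem inwardNeighbor_mem_Icc (hb : 1 ≤ b) :
    0 ≤ inwardNeighbor b t ∧ inwardNeighbor b t ≤ b := by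
  unfold inwardNeighbor
  split_ifs <;> omega

theorem abs_inwardNeighbor_sub (ht : t = 0 ∨ t = b) : |inwardNeighbor b t - t| = 1 := by
  unfold inwardNeighbor
  split_ifs <;> rw [abs_eq zero_le_one] <;> omega

theorem eq_inwardNeighbor_of_abs_sub_eq_one (hs : 0 ≤ s ∧ s ≤ b) (ht : t = 0 ∨ t = b)
    (hst : |s - t| = 1) : s = inwardNeighbor b t := by
  unfold inwardNeighbor
  rw [abs_eq zero_le_one] at hst
  split_ifs <;> omega

theorem abs_inwardNeighbor_sub_le_one (hs : 0 ≤ s ∧ s ≤ b) (ht : t = 0 ∨ t = b)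
    (hts : |t - s| ≤ 1) : |inwardNeighbor b t - s| ≤ 1 := by
  unfold inwardNeighbor
  rw [abs_le] at hts ⊢
  split_ifs <;> omega

end inwardNeighbor

/-- Each corner of a digital cube in ℤ³ with all b_i ≥ 2 has a close c_3-neighbor,
namely the unique point of X differing from it by exactly 1 in every coordinate. -/
theorem corner_has_close_c3_neighbor (b : Fin 3 → ℤ) (hb : ∀ i, 2 ≤ b i)
    (X : Set (Fin 3 → ℤ)) (hX : X = {x | ∀ i, 0 ≤ x i ∧ x i ≤ b i})
    (a : Fin 3 → ℤ) (ha : ∀ i, a i = 0 ∨ a i = b i) :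
    ∃ q ∈ X, (∀ i, |q i - a i| = 1) ∧
      (∀ q' ∈ X, (∀ i, |q' i - a i| = 1) → q' = q) ∧
      cAdj 3 3 a q ∧
      {y ∈ X | cAdj 3 3 a y} ⊆ {y ∈ X | cAdj 3 3 q y} ∪ {q} := by
  subst hX
  set q : Fin 3 → ℤ := fun i => inwardNeighbor (b i) (a i)
  have hqa : ∀ i, |q i - a i| = 1 := fun i => abs_inwardNeighbor_sub (ha i)
  have hq_ne : a ≠ q := fun h => by simpa [h] using hqa 0
  refine ⟨q, fun i => inwardNeighbor_mem_Icc (by linarith [hb i]), hqa, ?_, ?_, ?_⟩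
  · exact fun q' hq' hq'a => funext fun i =>
      eq_inwardNeighbor_of_abs_sub_eq_one (hq' i) (ha i) (hq'a i)
  · exact cAdj_self_iff.2 ⟨hq_ne, fun i => by rw [abs_sub_comm, hqa i]⟩
  · rintro y ⟨hy, hay⟩
    by_cases hyq : y = q
    · exact Or.inr hyq
    refine Or.inl ⟨hy, cAdj_self_iff.2 ⟨Ne.symm hyq, fun i => ?_⟩⟩
    exact abs_inwardNeighbor_sub_le_one (hy i) (ha i) ((cAdj_self_iff.1 hay).2 i)
end

section
/- Let X = ∏_{i=1}^{n} [r_i, s_i] ∩ ℤⁿ and Y = ∏_{i=1}^{n} [a_i, b_i] ∩ ℤⁿ with [r_i, s_i] ⊆ [a_i, b_i] for all i. Let A = ∏_{i=1}^{n} {r_i, s_i} be the set of corners of X. If f : X → Y is c_1-continuous and fixes every point of A, then f fixes every point of X. -/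
/-!
A c₁-continuous map sends c₁-adjacent points to points at ℓ¹ distance at most 1, so along an
axis-parallel segment it is 1-Lipschitz for the ℓ¹ distance. If it fixes both ends `p`, `q` of
such a segment, the image `u` of the point at distance `k` from `p` satisfies `d(u, p) ≤ k` and
`d(u, q) ≤ d(p, q) - k`, and as `p`, `q` differ in a single coordinate the point itself is the
only such `u`. Inducting on the set of free directions of a face of `X`, the corners then freeze
the edges, the 2-faces, and so on up to `X` itself.
-/

open Finset Function

section L1Dist

variable {ι : Type*} [Fintype ι]

def l1Dist (x y : ι → ℤ) : ℤ := ∑ j, |x j - y j|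

@[simp]
theorem l1Dist_self (x : ι → ℤ) : l1Dist x x = 0 := by
  simp [l1Dist]

theorem l1Dist_comm (x y : ι → ℤ) : l1Dist x y = l1Dist y x := by
  simp only [l1Dist, abs_sub_comm]

theorem l1Dist_triangle (x y z : ι → ℤ) : l1Dist x z ≤ l1Dist x y + l1Dist y z := by
  rw [l1Dist, l1Dist, l1Dist, ← sum_add_distrib]
  exact sum_le_sum fun j _ => abs_sub_le (x j) (y j) (z j)

theorem abs_sub_le_l1Dist (x y : ι → ℤ) (i : ι) : |x i - y i| ≤ l1Dist x y :=
  single_le_sum (f := fun j => |x j - y j|) (fun _ _ => abs_nonneg _) (mem_univ i)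

theorem eq_update_of_l1Dist_le [DecidableEq ι] {x y : ι → ℤ} {i : ι}
    (h : l1Dist x y ≤ |x i - y i|) : x = update y i (x i) := by
  have hrest : ∑ j ∈ univ.erase i, |x j - y j| = 0 := by
    have hsplit := add_sum_erase univ (fun j => |x j - y j|) (mem_univ i)
    rw [l1Dist] at h
    linarith [sum_nonneg fun j (_ : j ∈ univ.erase i) => abs_nonneg (x j - y j)]
  ext j
  rcases eq_or_ne j i with rfl | hji
  · simp
  · have := (sum_eq_zero_iff_of_nonneg fun j _ => abs_nonneg (x j - y j)).mp hrest j
      (mem_erase.mpr ⟨hji, mem_univ j⟩)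
    rw [update_of_ne hji]
    linarith [abs_eq_zero.mp this]

theorem eq_of_l1Dist_update_le [DecidableEq ι] {u x : ι → ℤ} {i : ι} {lo hi : ℤ}
    (hlo : l1Dist u (update x i lo) ≤ x i - lo) (hhi : l1Dist u (update x i hi) ≤ hi - x i) :
    u = x := by
  have h₁ := abs_sub_le_l1Dist u (update x i lo) i
  have h₂ := abs_sub_le_l1Dist u (update x i hi) i
  simp only [update_self] at h₁ h₂
  have hui : u i = x i := by
    rw [abs_le] at h₁ h₂
    omega
  have hu := eq_update_of_l1Dist_le (i := i) (hlo.trans_eq <| by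
    rw [update_self, hui, abs_of_nonneg (by linarith [abs_nonneg (u i - lo)])])
  rwa [update_idem, hui, update_eq_self] at hu

theorem l1Dist_le_of_steps {g : ℤ → ι → ℤ} {lo hi : ℤ}
    (hstep : ∀ v, lo ≤ v → v < hi → l1Dist (g v) (g (v + 1)) ≤ 1)
    {v w : ℤ} (hv : lo ≤ v) (hvw : v ≤ w) (hw : w ≤ hi) : l1Dist (g v) (g w) ≤ w - v := by
  induction w, hvw using Int.leInduction with
  | base => simp
  | succ w hvw ih =>
    calc l1Dist (g v) (g (w + 1)) ≤ l1Dist (g v) (g w) + l1Dist (g w) (g (w + 1)) :=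
          l1Dist_triangle _ _ _
      _ ≤ w + 1 - v := by linarith [ih (by omega), hstep w (by omega) (by omega)]

end L1Dist

section CAdj

variable {n : ℕ}

theorem cAdj.l1Dist_le {u : ℕ} {x y : Fin n → ℤ} (h : cAdj n u x y) : l1Dist x y ≤ u := by
  obtain ⟨-, hcoord, hcard⟩ := h
  calc l1Dist x y = ∑ j with x j ≠ y j, |x j - y j| :=
        (sum_filter_of_ne fun j _ hj => by simpa [sub_eq_zero] using hj).symm
    _ = ∑ j with x j ≠ y j, 1 :=
        sum_congr rfl fun j hj => (hcoord j).resolve_left (mem_filter.mp hj).2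
    _ ≤ u := by simpa using hcard

theorem cAdj_update_add_one (x : Fin n → ℤ) (i : Fin n) (v : ℤ) :
    cAdj n 1 (update x i v) (update x i (v + 1)) := by
  refine ⟨fun h => by simpa using congrFun h i, fun j => ?_, card_le_one.mpr fun j hj k hk => ?_⟩
  · rcases eq_or_ne j i with rfl | hji
    · simp
    · simp [update_of_ne hji]
  · have key : ∀ l ∈ ({l | update x i v l ≠ update x i (v + 1) l} : Finset (Fin n)), l = i := by
      intro l hl
      by_contra hli
      simp [update_of_ne hli] at hl
    rw [key j hj, key k hk]

end CAdj

theorem DigCont.eq_self_of_segment_ends_fixed {n : ℕ} {X : Set (Fin n → ℤ)}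
    {f : (Fin n → ℤ) → (Fin n → ℤ)}
    (hf : DigCont (cAdj n 1) (cAdj n 1) X f) {x : Fin n → ℤ} {i : Fin n} {lo hi : ℤ}
    (hlo : lo ≤ x i) (hhi : x i ≤ hi) (hseg : ∀ v, lo ≤ v → v ≤ hi → update x i v ∈ X)
    (hflo : f (update x i lo) = update x i lo) (hfhi : f (update x i hi) = update x i hi) :
    f x = x := by
  set g : ℤ → Fin n → ℤ := fun v => f (update x i v)
  have hstep : ∀ v, lo ≤ v → v < hi → l1Dist (g v) (g (v + 1)) ≤ 1 := by
    intro v hv hvhi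
    rcases hf _ (hseg v hv hvhi.le) _ (hseg (v + 1) (by omega) hvhi) (cAdj_update_add_one x i v)
      with heq | hadj
    · simp [g, heq]
    · exact_mod_cast hadj.l1Dist_le
  have hgx : g (x i) = f x := by simp [g]
  apply eq_of_l1Dist_update_le (lo := lo) (hi := hi) (i := i)
  · rw [l1Dist_comm, ← hflo, ← hgx]
    exact l1Dist_le_of_steps hstep le_rfl hlo hhi
  · rw [← hfhi, ← hgx]
    exact l1Dist_le_of_steps hstep hlo hhi le_rfl

theorem DigCont.eq_self_on_face_of_corners_fixed {n : ℕ} {r s : Fin n → ℤ}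
    {f : (Fin n → ℤ) → (Fin n → ℤ)}
    (hf : DigCont (cAdj n 1) (cAdj n 1) {x | ∀ i, r i ≤ x i ∧ x i ≤ s i} f)
    (hfix : ∀ x, (∀ i, x i = r i ∨ x i = s i) → f x = x) (S : Finset (Fin n)) :
    ∀ x, (∀ i, r i ≤ x i ∧ x i ≤ s i) → (∀ i ∉ S, x i = r i ∨ x i = s i) → f x = x := by
  induction S using Finset.induction_on with
  | empty => exact fun x _ hx => hfix x fun i => hx i (notMem_empty i)
  | insert i S _ ih =>
    intro x hx hcorner
    have hupdate :
        ∀ v, r i ≤ v → v ≤ s i → ∀ j, r j ≤ update x i v j ∧ update x i v j ≤ s j := by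
      intro v hrv hvs j
      rcases eq_or_ne j i with rfl | hji
      · simpa using ⟨hrv, hvs⟩
      · simpa [update_of_ne hji] using hx j
    have hface : ∀ v, v = r i ∨ v = s i → f (update x i v) = update x i v := by
      intro v hv
      have hvi : r i ≤ v ∧ v ≤ s i := by
        rcases hv with rfl | rfl <;> constructor <;> linarith [hx i]
      refine ih _ (hupdate v hvi.1 hvi.2) fun j hj => ?_
      rcases eq_or_ne j i with rfl | hji
      · simpa using hv
      · simpa [update_of_ne hji] using hcorner j (by simp [hji, hj])
    exact hf.eq_self_of_segment_ends_fixed (hx i).1 (hx i).2 hupdate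
      (hface _ (Or.inl rfl)) (hface _ (Or.inr rfl))

theorem cornersFreeze_into_larger_cube_general {n : ℕ} (r s : Fin n → ℤ)
    (X : Set (Fin n → ℤ)) (hX : X = {x | ∀ i, r i ≤ x i ∧ x i ≤ s i})
    (A : Set (Fin n → ℤ)) (hA : A = {x | ∀ i, x i = r i ∨ x i = s i})
    (f : (Fin n → ℤ) → (Fin n → ℤ))
    (hf : DigCont (cAdj n 1) (cAdj n 1) X f)
    (hfix : ∀ x ∈ A, f x = x) :
    ∀ x ∈ X, f x = x := by
  subst hX hA
  exact fun x hx =>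
    hf.eq_self_on_face_of_corners_fixed hfix univ x hx fun i hi => (hi (mem_univ i)).elim

/-- If a c_1-continuous map from a digital cube X into a larger cube Y fixes the
corners of X, then it fixes every point of X. -/
theorem cornersFreeze_into_larger_cube {n : ℕ} (r s a b : Fin n → ℤ)
    (hrs : ∀ i, r i ≤ s i) (har : ∀ i, a i ≤ r i) (hsb : ∀ i, s i ≤ b i)
    (X : Set (Fin n → ℤ)) (hX : X = {x | ∀ i, r i ≤ x i ∧ x i ≤ s i})
    (Y : Set (Fin n → ℤ)) (hY : Y = {x | ∀ i, a i ≤ x i ∧ x i ≤ b i})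
    (A : Set (Fin n → ℤ)) (hA : A = {x | ∀ i, x i = r i ∨ x i = s i})
    (f : (Fin n → ℤ) → (Fin n → ℤ)) (hfXY : ∀ x ∈ X, f x ∈ Y)
    (hf : DigCont (cAdj n 1) (cAdj n 1) X f)
    (hfix : ∀ x ∈ A, f x = x) :
    ∀ x ∈ X, f x = x :=
  cornersFreeze_into_larger_cube_general r s X hX A hA f hf hfix
end

section
/- For n ∈ {1, 2}, the corner set A = ∏_{i=1}^{n} {r_i, s_i} of the digital cube X = ∏_{i=1}^{n} [r_i, s_i] ∩ ℤⁿ (with s_i > r_i) is a minimal freezing set for (X, c_1): A is a freezing set and no proper subset of A is a freezing set. -/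
/-!
A `c₁`-continuous map changes each coordinate by at most one per step, so if it fixes both ends
of an axis-parallel segment of length `m`, the image of the segment is a walk gaining `m` in
`m` steps and the segment is fixed pointwise. Sweeping one coordinate at a time, starting from
the corners, reaches every point of the box. Conversely, when `n ≤ 2`, moving a single corner one
step diagonally inward keeps it equal or adjacent to each of its neighbours in the box; this map
is continuous, so no set missing a corner is freezing.
-/

open Function

def box {n : ℕ} (r s : Fin n → ℤ) : Set (Fin n → ℤ) := {x | ∀ i, r i ≤ x i ∧ x i ≤ s i}

def corners {n : ℕ} (r s : Fin n → ℤ) : Set (Fin n → ℤ) := {x | ∀ i, x i = r i ∨ x i = s i}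

instance {n u : ℕ} : Std.Symm (cAdj n u) where
  symm x y h :=
    ⟨h.1.symm, fun i => (h.2.1 i).imp Eq.symm (abs_sub_comm _ _).trans,
      by simpa only [ne_comm] using h.2.2⟩

section cAdj

variable {n : ℕ} {x y : Fin n → ℤ}

lemma cAdj.le_add_one {u : ℕ} (h : cAdj n u x y) (i : Fin n) : y i ≤ x i + 1 := by
  grind [h.2.1 i]

lemma cAdj_one_eq_of_ne (h : cAdj n 1 x y) {i j : Fin n} (hi : x i ≠ y i) (hj : j ≠ i) :
    x j = y j := by
  by_contra hxy
  exact hj (Finset.card_le_one.1 h.2.2 j (by simpa using hxy) i (by simpa using hi))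

lemma cAdj_one_update_add_one (x : Fin n → ℤ) (i : Fin n) :
    cAdj n 1 x (update x i (x i + 1)) := by
  refine ⟨fun h => by simpa using congrFun h i, fun j => ?_, ?_⟩
  · by_cases hj : j = i <;> simp [hj]
  · refine Finset.card_le_one.2 fun j hj k hk => ?_
    simp only [Finset.mem_filter, Finset.mem_univ, true_and] at hj hk
    by_contra hjk
    rcases eq_or_ne j i with rfl | hji
    · exact hk (update_of_ne (Ne.symm hjk) ..).symm
    · exact hj (update_of_ne hji ..).symm

lemma eq_or_cAdj_one_of_eq_at (hn : n ≤ 2) {i : Fin n} (hi : x i = y i)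
    (h : ∀ j, x j = y j ∨ |x j - y j| = 1) : x = y ∨ cAdj n 1 x y := by
  refine or_iff_not_imp_left.2 fun hne => ⟨hne, h, ?_⟩
  calc (Finset.univ.filter fun j => x j ≠ y j).card
      ≤ (Finset.univ.erase i).card :=
        Finset.card_le_card fun j hj => by grind
    _ ≤ 1 := by
      rw [Finset.card_erase_of_mem (Finset.mem_univ i), Finset.card_univ, Fintype.card_fin]
      omega

end cAdj

lemma eq_update_of_walk {n m : ℕ} {w : ℕ → Fin n → ℤ} {i : Fin n}
    (hw : ∀ k < m, w k = w (k + 1) ∨ cAdj n 1 (w k) (w (k + 1)))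
    (hm : w m i = w 0 i + m) :
    ∀ k ≤ m, w k = update (w 0) i (w 0 i + k) := by
  have hstep : ∀ k < m, w (k + 1) i ≤ w k i + 1 := fun k hk => by
    rcases hw k hk with h | h
    · rw [h]; omega
    · exact h.le_add_one i
  have hgain : ∀ k l, k + l ≤ m → w (k + l) i ≤ w k i + l := by
    intro k l hkl
    induction l with
    | zero => simp
    | succ l ih => push_cast; have := hstep (k + l) (by omega); grind
  have hcoord : ∀ k ≤ m, w k i = w 0 i + k := fun k hk => by
    have h0 := hgain 0 k (by omega)
    have h1 := hgain k (m - k) (by omega)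
    rw [Nat.add_sub_cancel' hk, Nat.cast_sub hk] at h1
    rw [zero_add] at h0
    omega
  have hfixed : ∀ k < m, ∀ j ≠ i, w (k + 1) j = w k j := fun k hk j hj => by
    have hne : w k i ≠ w (k + 1) i := by
      rw [hcoord k hk.le, hcoord (k + 1) hk]; push_cast; omega
    rcases hw k hk with h | h
    · exact absurd (congrFun h i) hne
    · exact (cAdj_one_eq_of_ne h hne hj).symm
  intro k hk
  ext j
  rcases eq_or_ne j i with rfl | hj
  · simpa using hcoord k hk
  · rw [update_of_ne hj]
    induction k with
    | zero => rfl
    | succ k ih => rw [hfixed k (by omega) j hj, ih (by omega)]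

lemma update_mem_box {n : ℕ} {r s x : Fin n → ℤ} (hx : x ∈ box r s) {i : Fin n} {t : ℤ}
    (hr : r i ≤ t) (hs : t ≤ s i) : update x i t ∈ box r s := by
  intro j
  rcases eq_or_ne j i with rfl | hj
  · simpa using ⟨hr, hs⟩
  · simpa [hj] using hx j

lemma apply_eq_of_fixes_ends {n : ℕ} {r s : Fin n → ℤ} {g : (Fin n → ℤ) → Fin n → ℤ}
    (hg : DigCont (cAdj n 1) (cAdj n 1) (box r s) g) {x : Fin n → ℤ} (hx : x ∈ box r s)
    (i : Fin n) (hr : g (update x i (r i)) = update x i (r i))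
    (hs : g (update x i (s i)) = update x i (s i)) : g x = x := by
  obtain ⟨hrx, hxs⟩ := hx i
  obtain ⟨m, hm⟩ : ∃ m : ℕ, s i = r i + m := ⟨(s i - r i).toNat, by omega⟩
  obtain ⟨k, hk⟩ : ∃ k : ℕ, x i = r i + k := ⟨(x i - r i).toNat, by omega⟩
  set p : ℕ → Fin n → ℤ := fun k => update x i (r i + k)
  have hp0 : p 0 = update x i (r i) := by simp [p]
  have hpm : p m = update x i (s i) := by simp [p, hm]
  have hpX : ∀ l ≤ m, p l ∈ box r s := fun l hl =>
    update_mem_box hx (by omega) (by omega)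
  have hwalk := eq_update_of_walk (w := g ∘ p) (i := i) (m := m)
    (fun l hl => hg _ (hpX l hl.le) _ (hpX (l + 1) hl) (by
      simpa [p, add_assoc] using cAdj_one_update_add_one (p l) i))
    (by rw [comp_apply, comp_apply, hpm, hp0, hs, hr]; simp [hm])
  have := hwalk k (by omega)
  simp only [comp_apply, hp0, hr, update_self, update_idem] at this
  simpa [p, ← hk] using this

lemma corners_subset_box {n : ℕ} {r s : Fin n → ℤ} (hrs : r ≤ s) : corners r s ⊆ box r s :=
  fun x hx i => by rcases hx i with h | h <;> rw [h] <;> simp [hrs i]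

/-- Points whose coordinates from `k` on are extreme are fixed, by induction on `k`: the ends
of the segment through such a point in direction `k` have one more extreme coordinate. -/
theorem freezingSet_corners {n : ℕ} {r s : Fin n → ℤ} (hrs : r ≤ s) :
    FreezingSet (cAdj n 1) (box r s) (corners r s) := by
  refine ⟨corners_subset_box hrs, fun g _ hg hfix => ?_⟩
  suffices ∀ k ≤ n, ∀ x ∈ box r s, (∀ i : Fin n, k ≤ i → x i = r i ∨ x i = s i) → g x = x from
    fun x hx => this n le_rfl x hx fun i hi => absurd i.isLt (not_lt.2 hi)
  intro k hk
  induction k with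
  | zero => exact fun x _ hx => hfix x fun i => hx i (Nat.zero_le _)
  | succ k ih =>
    intro x hx hext
    have hend : ∀ t, (t = r ⟨k, hk⟩ ∨ t = s ⟨k, hk⟩) →
        g (update x ⟨k, hk⟩ t) = update x ⟨k, hk⟩ t := by
      intro t ht
      have htX : r ⟨k, hk⟩ ≤ t ∧ t ≤ s ⟨k, hk⟩ := by
        rcases ht with rfl | rfl <;> simp [hrs ⟨k, hk⟩]
      refine ih (by omega) _ (update_mem_box hx htX.1 htX.2) fun i hi => ?_
      rcases eq_or_ne i ⟨k, hk⟩ with rfl | hik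
      · simpa using ht
      · simpa [hik] using hext i (by grind)
    exact apply_eq_of_fixes_ends hg hx ⟨k, hk⟩ (hend _ (.inl rfl)) (hend _ (.inr rfl))

/-- The map moving `c` alone to `c'` is continuous, and fixes `B` unless `c ∈ B`. -/
lemma mem_of_freezingSet {α : Type*} {κ : α → α → Prop} [Std.Symm κ] {X B : Set α}
    (hB : FreezingSet κ X B) {c c' : α} (hc : c ∈ X) (hc' : c' ∈ X) (hne : c' ≠ c)
    (hnbr : ∀ y ∈ X, κ c y → c' = y ∨ κ c' y) : c ∈ B := by
  classical
  by_contra hcB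
  set g : α → α := update id c c'
  have hgX : ∀ x ∈ X, g x ∈ X := fun x hx => by
    by_cases hxc : x = c <;> simp [g, hxc, hc', hx]
  have hg : DigCont κ κ X g := by
    intro x hx y hy hxy
    by_cases hxc : x = c <;> by_cases hyc : y = c
    · simp [hxc, hyc]
    · subst hxc; simpa [g, hyc] using hnbr y hy hxy
    · subst hyc
      simpa [g, hxc, eq_comm] using (hnbr x hx (symm_of κ hxy)).imp_right (symm_of κ)
    · simpa [g, hxc, hyc] using Or.inr hxy
  have hfix : ∀ a ∈ B, g a = a := fun a ha => by
    simp [g, show a ≠ c from fun h => hcB (h ▸ ha)]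
  exact hne (by simpa [g] using hB.2 g hgX hg hfix c hc)

section stepInward

variable {n : ℕ} {r s c : Fin n → ℤ}

def stepInward (r c : Fin n → ℤ) : Fin n → ℤ := fun i => if c i = r i then c i + 1 else c i - 1

lemma stepInward_mem_box (hrs : ∀ i, r i < s i) (hc : c ∈ corners r s) :
    stepInward r c ∈ box r s := fun i => by
  have := hrs i
  rcases hc i with h | h <;> simp only [stepInward] <;> split_ifs <;> omega

lemma stepInward_ne (hn : n ≠ 0) : stepInward r c ≠ c := fun h => by
  have := congrFun h ⟨0, Nat.pos_of_ne_zero hn⟩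
  simp only [stepInward] at this
  split_ifs at this <;> omega

lemma eq_or_cAdj_stepInward (hn : n ≤ 2) (hrs : ∀ i, r i < s i) (hc : c ∈ corners r s)
    {y : Fin n → ℤ} (hy : y ∈ box r s) (hcy : cAdj n 1 c y) :
    stepInward r c = y ∨ cAdj n 1 (stepInward r c) y := by
  obtain ⟨i, hi⟩ := Function.ne_iff.1 hcy.1
  have hyi : stepInward r c i = y i := by
    have := hcy.2.1 i; have := hc i; have := hy i; have := hrs i
    simp only [stepInward]; split_ifs <;> grind
  refine eq_or_cAdj_one_of_eq_at hn hyi fun j => ?_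
  rcases eq_or_ne j i with rfl | hji
  · exact .inl hyi
  · rw [← cAdj_one_eq_of_ne hcy hi hji]
    right; simp only [stepInward]; split_ifs <;> simp

end stepInward

/-- For n ∈ {1,2}, the corner set of a digital cube is a minimal freezing set for
(X, c_1). -/
theorem corners_minimal_freezingSet_c1 {n : ℕ} (hn : n = 1 ∨ n = 2)
    (r s : Fin n → ℤ) (hrs : ∀ i, r i < s i)
    (X : Set (Fin n → ℤ)) (hX : X = {x | ∀ i, r i ≤ x i ∧ x i ≤ s i})
    (A : Set (Fin n → ℤ)) (hA : A = {x | ∀ i, x i = r i ∨ x i = s i}) :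
    FreezingSet (cAdj n 1) X A ∧ ∀ B ⊂ A, ¬FreezingSet (cAdj n 1) X B := by
  subst hX hA
  have hle : r ≤ s := fun i => (hrs i).le
  refine ⟨freezingSet_corners hle, fun B hB hfreeze => ?_⟩
  obtain ⟨c, hc, hcB⟩ := Set.exists_of_ssubset hB
  exact hcB <| mem_of_freezingSet hfreeze (corners_subset_box hle hc) (stepInward_mem_box hrs hc)
    (stepInward_ne (by omega)) fun y hy => eq_or_cAdj_stepInward (by omega) hrs hc hy
end

section
/- Let X = {0,1}³ ⊆ ℤ³ and A = {(0,0,0), (0,1,1), (1,0,1), (1,1,0)}. Then A is a freezing set for (X, c_1). In particular, the full corner set of a cube need not be a minimal c_1-freezing set. -/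
/-!
Every corner of the unit cube outside `A` has all three of its cube neighbours in `A`. In the
c₁ grid a point is within distance one of three neighbours of `x` in distinct directions only if
it is `x` itself, so a continuous self-map fixing `A` must also fix the remaining corners.
-/

lemma eq_or_eq_of_eq_or_cAdj_one {n : ℕ} {y a : Fin n → ℤ} (hya : y = a ∨ cAdj n 1 y a)
    {l m : Fin n} (hlm : l ≠ m) : y l = a l ∨ y m = a m := by
  rcases hya with rfl | ⟨-, -, hcard⟩
  · exact Or.inl rfl
  by_contra! h
  have hl : l ∈ Finset.univ.filter (fun i => y i ≠ a i) := by simp [h.1]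
  have hm : m ∈ Finset.univ.filter (fun i => y i ≠ a i) := by simp [h.2]
  exact hlm (Finset.card_le_one.mp hcard l hl m hm)

theorem eq_of_eq_or_cAdj_one_of_two_lt_card {n : ℕ} {x y : Fin n → ℤ} {S : Finset (Fin n)}
    (hS : 2 < S.card) (z : Fin n → Fin n → ℤ) (hz_self : ∀ p ∈ S, z p p ≠ x p)
    (hz_of_ne : ∀ p ∈ S, ∀ q ≠ p, z p q = x q) (hy : ∀ p ∈ S, y = z p ∨ cAdj n 1 y (z p)) :
    y = x := by
  by_contra hyx
  obtain ⟨l, hl⟩ : ∃ l, y l ≠ x l := Function.ne_iff.mp hyx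
  obtain ⟨p, hpS, hpl⟩ := Finset.exists_mem_ne (by omega : 1 < S.card) l
  have hyp : y p ≠ x p := by
    rcases eq_or_eq_of_eq_or_cAdj_one (hy p hpS) (Ne.symm hpl) with h | h
    · exact absurd (h.trans (hz_of_ne p hpS l (Ne.symm hpl))) hl
    · exact h ▸ hz_self p hpS
  -- `y` now differs from `x` at both `l` and `p`, so it is too far from `z q` for a third `q`.
  have hcard : 1 < (S.erase l).card := by
    have := Finset.pred_card_le_card_erase (s := S) (a := l)
    omega
  obtain ⟨q, hq, hqp⟩ := Finset.exists_mem_ne hcard p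
  obtain ⟨hql, hqS⟩ := Finset.mem_erase.mp hq
  rcases eq_or_eq_of_eq_or_cAdj_one (hy q hqS) (Ne.symm hpl) with h | h
  · exact hl (h.trans (hz_of_ne q hqS l (Ne.symm hql)))
  · exact hyp (h.trans (hz_of_ne q hqS p (Ne.symm hqp)))

def unitCube (n : ℕ) : Set (Fin n → ℤ) :=
  {x | ∀ i, x i = 0 ∨ x i = 1}

def flipCoord {n : ℕ} (x : Fin n → ℤ) (i : Fin n) : Fin n → ℤ :=
  Function.update x i (1 - x i)

lemma flipCoord_apply_self_ne {n : ℕ} (x : Fin n → ℤ) (i : Fin n) : flipCoord x i i ≠ x i := by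
  simp only [flipCoord, Function.update_self]
  omega

lemma flipCoord_apply_of_ne {n : ℕ} (x : Fin n → ℤ) {i j : Fin n} (hji : j ≠ i) :
    flipCoord x i j = x j :=
  Function.update_of_ne hji _ _

lemma flipCoord_mem_unitCube {n : ℕ} {x : Fin n → ℤ} (hx : x ∈ unitCube n) (i : Fin n) :
    flipCoord x i ∈ unitCube n := by
  intro j
  rcases eq_or_ne j i with rfl | hji
  · have := hx j
    simp only [flipCoord, Function.update_self]
    omega
  · simpa only [flipCoord_apply_of_ne x hji] using hx j

lemma cAdj_one_flipCoord {n : ℕ} {x : Fin n → ℤ} {i : Fin n} (hxi : x i = 0 ∨ x i = 1) :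
    cAdj n 1 x (flipCoord x i) := by
  refine ⟨fun h => flipCoord_apply_self_ne x i (congrFun h i).symm, fun j => ?_, ?_⟩
  · rcases eq_or_ne j i with rfl | hji
    · right
      simp only [flipCoord, Function.update_self]
      rcases hxi with h | h <;> simp [h]
    · exact Or.inl (flipCoord_apply_of_ne x hji).symm
  · refine (Finset.card_le_card fun j hj => ?_).trans (Finset.card_singleton i).le
    by_contra hji
    exact (Finset.mem_filter.mp hj).2 (flipCoord_apply_of_ne x (Finset.notMem_singleton.mp hji)).symm

def evenCorners : Set (Fin 3 → ℤ) :=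
  {![0, 0, 0], ![0, 1, 1], ![1, 0, 1], ![1, 1, 0]}

lemma evenCorners_subset_unitCube : evenCorners ⊆ unitCube 3 := by
  rintro a (rfl | rfl | rfl | rfl) <;> intro i <;> fin_cases i <;> decide

lemma flipCoord_mem_evenCorners {x : Fin 3 → ℤ} (hx : x ∈ unitCube 3) (hxA : x ∉ evenCorners)
    (i : Fin 3) : flipCoord x i ∈ evenCorners := by
  obtain ⟨x0, x1, x2, rfl⟩ : ∃ x0 x1 x2, x = ![x0, x1, x2] :=
    ⟨x 0, x 1, x 2, by funext j; fin_cases j <;> rfl⟩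
  simp only [evenCorners, Set.mem_insert_iff, Set.mem_singleton_iff] at hxA ⊢
  revert hxA
  rcases hx 0 with h0 | h0 <;> rcases hx 1 with h1 | h1 <;> rcases hx 2 with h2 | h2 <;>
    simp only [Matrix.cons_val] at h0 h1 h2 <;> subst h0 h1 h2 <;> fin_cases i <;> decide

/-- Four of the eight corners of the unit cube form a freezing set for (X, c_1). -/
theorem hypercube_four_corners_freeze
    (X : Set (Fin 3 → ℤ)) (hX : X = {x | ∀ i, x i = 0 ∨ x i = 1})
    (A : Set (Fin 3 → ℤ))
    (hA : A = {![0, 0, 0], ![0, 1, 1], ![1, 0, 1], ![1, 1, 0]}) :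
    FreezingSet (cAdj 3 1) X A := by
  change X = unitCube 3 at hX
  change A = evenCorners at hA
  subst hX hA
  refine ⟨evenCorners_subset_unitCube, fun g hg hcont hfix x hx => ?_⟩
  by_cases hxA : x ∈ evenCorners
  · exact hfix x hxA
  refine eq_of_eq_or_cAdj_one_of_two_lt_card (S := Finset.univ) (by simp) (flipCoord x)
    (fun p _ => flipCoord_apply_self_ne x p) (fun p _ q hqp => flipCoord_apply_of_ne x hqp)
    (fun p _ => ?_)
  rw [← hfix _ (flipCoord_mem_evenCorners hx hxA p)]
  exact hcont x hx _ (flipCoord_mem_unitCube hx p) (cAdj_one_flipCoord (hx p))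
end

section
/- Let X be a finite digital image in ℤⁿ, A ⊆ X, and 1 ≤ u ≤ n. If f ∈ C(X, c_u) fixes every point of Bd(A), then f fixes every point of A. -/
/-!
Fix `x ∈ A` and a coordinate `i`. Since `A` is finite, walking from `x` in direction `±eᵢ`
leaves `A`, and the last point `p = x ± t eᵢ` of the walk inside `A` lies in `Bd A`, so
`f p = p`. Each step is a `c_u`-adjacency, so by continuity the `i`-th coordinate of `f`
changes by at most `1` per step, whence `|f x i - (x i ± t)| ≤ t`. The walk in direction
`+eᵢ` gives `x i ≤ f x i`, the one in direction `-eᵢ` gives `f x i ≤ x i`.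
-/

lemma abs_sub_le_of_abs_sub_succ_le_one {a : ℕ → ℤ} {t : ℕ}
    (h : ∀ s < t, |a s - a (s + 1)| ≤ 1) : |a 0 - a t| ≤ t := by
  induction t with
  | zero => simp
  | succ t ih =>
    have := abs_sub_le (a 0) (a t) (a (t + 1))
    have := h t t.lt_succ_self
    have := ih fun s hs => h s (hs.trans t.lt_succ_self)
    push_cast
    linarith

section

variable {n u : ℕ}

theorem cAdj_add_single (hu : 1 ≤ u) (y : Fin n → ℤ) (i : Fin n) {ε : ℤ} (hε : |ε| = 1) :
    cAdj n u y (y + Pi.single i ε) := by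
  have hε0 : ε ≠ 0 := by rintro rfl; simp at hε
  refine ⟨fun h => hε0 (by simpa using congrFun h i), fun j => ?_, ?_⟩
  · rcases eq_or_ne j i with rfl | hj
    · simp [hε]
    · simp [hj]
  · calc (Finset.univ.filter fun j => y j ≠ (y + Pi.single i ε : Fin n → ℤ) j).card
        ≤ ({i} : Finset (Fin n)).card :=
          Finset.card_le_card fun j hj => by
            by_contra hji
            simp_all
      _ ≤ u := hu

theorem abs_sub_apply_le_one_of_cAdj {a b : Fin n → ℤ} (h : cAdj n u a b) (i : Fin n) :
    |a i - b i| ≤ 1 := by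
  rcases h.2.1 i with h' | h' <;> simp [h']

theorem DigCont.abs_apply_sub_le {X : Set (Fin n → ℤ)} {f : (Fin n → ℤ) → (Fin n → ℤ)}
    (hf : DigCont (cAdj n u) (cAdj n u) X f) {r : ℕ → Fin n → ℤ} {t : ℕ}
    (hrX : ∀ s ≤ t, r s ∈ X) (hr : ∀ s < t, cAdj n u (r s) (r (s + 1))) (i : Fin n) :
    |f (r 0) i - f (r t) i| ≤ t :=
  abs_sub_le_of_abs_sub_succ_le_one (a := fun s => f (r s) i) fun s hs => by
    rcases hf _ (hrX s hs.le) _ (hrX (s + 1) hs) (hr s hs) with h | h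
    · simp [h]
    · exact abs_sub_apply_le_one_of_cAdj h i

def ray (x : Fin n → ℤ) (i : Fin n) (ε : ℤ) (s : ℕ) : Fin n → ℤ :=
  x + Pi.single i (ε * s)

@[simp] theorem ray_zero (x : Fin n → ℤ) (i : Fin n) (ε : ℤ) : ray x i ε 0 = x := by
  simp [ray]

theorem ray_succ (x : Fin n → ℤ) (i : Fin n) (ε : ℤ) (s : ℕ) :
    ray x i ε (s + 1) = ray x i ε s + Pi.single i ε := by
  simp only [ray, add_assoc, ← Pi.single_add]
  congr 3
  push_cast
  ring

@[simp] theorem ray_apply_self (x : Fin n → ℤ) (i : Fin n) (ε : ℤ) (s : ℕ) :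
    ray x i ε s i = x i + ε * s := by
  simp [ray]

theorem ray_injective (x : Fin n → ℤ) (i : Fin n) {ε : ℤ} (hε : ε ≠ 0) :
    Function.Injective (ray x i ε) := fun a b h => by
  simpa [hε] using congrFun h i

theorem cAdj_ray_succ (hu : 1 ≤ u) (x : Fin n → ℤ) (i : Fin n) {ε : ℤ} (hε : |ε| = 1)
    (s : ℕ) : cAdj n u (ray x i ε s) (ray x i ε (s + 1)) := by
  rw [ray_succ]
  exact cAdj_add_single hu _ i hε

theorem exists_ray_mem_bd {A : Set (Fin n → ℤ)} (hA : A.Finite) {x : Fin n → ℤ} (hx : x ∈ A)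
    (i : Fin n) {ε : ℤ} (hε : |ε| = 1) :
    ∃ t, (∀ s ≤ t, ray x i ε s ∈ A) ∧ ray x i ε t ∈ Bd n A := by
  classical
  have hε0 : ε ≠ 0 := by rintro rfl; simp at hε
  have hexit : ∃ s, ray x i ε s ∉ A := by
    by_contra! hall
    exact Set.infinite_of_injective_forall_mem (ray_injective x i hε0) hall hA
  obtain ⟨t, ht⟩ : ∃ t, Nat.find hexit = t + 1 :=
    Nat.exists_eq_succ_of_ne_zero fun h0 => Nat.find_spec hexit (by simpa [h0] using hx)
  have hmem : ∀ s ≤ t, ray x i ε s ∈ A := fun s hs =>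
    not_not.mp (Nat.find_min hexit (by omega))
  exact ⟨t, hmem, hmem t le_rfl, _, ht ▸ Nat.find_spec hexit, cAdj_ray_succ le_rfl x i hε t⟩

theorem mul_apply_sub_nonneg_of_fix_bd (hu : 1 ≤ u) {X A : Set (Fin n → ℤ)} (hA : A.Finite)
    (hAX : A ⊆ X) {f : (Fin n → ℤ) → (Fin n → ℤ)} (hf : DigCont (cAdj n u) (cAdj n u) X f)
    (hfix : ∀ x ∈ Bd n A, f x = x) {x : Fin n → ℤ} (hx : x ∈ A) (i : Fin n) {ε : ℤ}
    (hε : |ε| = 1) : 0 ≤ ε * (f x i - x i) := by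
  obtain ⟨t, hmem, hbd⟩ := exists_ray_mem_bd hA hx i hε
  have hlip := hf.abs_apply_sub_le (fun s hs => hAX (hmem s hs))
    (fun s _ => cAdj_ray_succ hu x i hε s) i
  rw [ray_zero, hfix _ hbd, ray_apply_self, abs_le] at hlip
  rcases (abs_eq zero_le_one).mp hε with rfl | rfl <;> linarith

end

theorem fix_of_fix_bd_general {n u : ℕ} (hu1 : 1 ≤ u)
    (X : Set (Fin n → ℤ)) (hX : X.Finite) (A : Set (Fin n → ℤ)) (hAX : A ⊆ X)
    (f : (Fin n → ℤ) → (Fin n → ℤ))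
    (hf : DigCont (cAdj n u) (cAdj n u) X f)
    (hfix : ∀ x ∈ Bd n A, f x = x) :
    ∀ x ∈ A, f x = x := by
  intro x hx
  funext i
  have hA := hX.subset hAX
  have hup := mul_apply_sub_nonneg_of_fix_bd hu1 hA hAX hf hfix hx i (ε := 1) (by simp)
  have hdown := mul_apply_sub_nonneg_of_fix_bd hu1 hA hAX hf hfix hx i (ε := -1) (by simp)
  linarith

/-- If a c_u-continuous self-map of a finite digital image fixes Bd(A) pointwise,
then it fixes A pointwise. -/
theorem fix_of_fix_bd {n u : ℕ} (hu1 : 1 ≤ u) (hun : u ≤ n)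
    (X : Set (Fin n → ℤ)) (hX : X.Finite) (A : Set (Fin n → ℤ)) (hAX : A ⊆ X)
    (f : (Fin n → ℤ) → (Fin n → ℤ)) (hfX : ∀ x ∈ X, f x ∈ X)
    (hf : DigCont (cAdj n u) (cAdj n u) X f)
    (hfix : ∀ x ∈ Bd n A, f x = x) :
    ∀ x ∈ A, f x = x :=
  fix_of_fix_bd_general hu1 X hX A hAX f hf hfix
end

section
/- Let X = ∏_{i=1}^{n} [a_i, b_i] ∩ ℤⁿ with b_i > a_i for all i, and let x₀ ∈ X with p_i(x₀) = a_i for some index i. Then the function f : X → X that fixes every point except x₀ and sends x₀ to x₀ + e_i (the point obtained by increasing the i-th coordinate by 1) is c_n-continuous. -/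
/- Moving x₀ to x₀ + eᵢ can only break adjacency with a neighbour y of x₀ if yᵢ = x₀ᵢ - 1, and
since x₀ᵢ = aᵢ is minimal in the box, no such y lies in X. -/

lemma cAdj.symm {n u : ℕ} {x y : Fin n → ℤ} (h : cAdj n u x y) : cAdj n u y x := by
  obtain ⟨hne, hcoord, hcard⟩ := h
  refine ⟨hne.symm, fun j => ?_, ?_⟩
  · rw [eq_comm, abs_sub_comm]
    exact hcoord j
  · simpa only [ne_comm] using hcard

lemma cAdj_iff_of_le {n u : ℕ} (hu : n ≤ u) {x y : Fin n → ℤ} :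
    cAdj n u x y ↔ x ≠ y ∧ ∀ j, |x j - y j| ≤ 1 := by
  have hcoord : ∀ j, (x j = y j ∨ |x j - y j| = 1) ↔ |x j - y j| ≤ 1 := fun j => by
    rw [abs_le, abs_eq zero_le_one]
    omega
  have hcard : (Finset.univ.filter (fun j => x j ≠ y j)).card ≤ u :=
    (Finset.card_filter_le _ _).trans (by simpa using hu)
  simp only [cAdj, hcoord, hcard, and_true]

lemma DigCont.ite_eq {α : Type*} [DecidableEq α] {κ : α → α → Prop}
    (hκ : ∀ x y, κ x y → κ y x) {X : Set α} {x₀ p : α}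
    (hp : ∀ y ∈ X, κ x₀ y → p = y ∨ κ p y) :
    DigCont κ κ X (fun x => if x = x₀ then p else x) := by
  intro x hx y hy hxy
  dsimp only
  by_cases hx₀ : x = x₀ <;> by_cases hy₀ : y = x₀
  · simp only [hx₀, hy₀, true_or]
  · rw [if_pos hx₀, if_neg hy₀]
    exact hp y hy (hx₀ ▸ hxy)
  · rw [if_neg hx₀, if_pos hy₀]
    exact (hp x hx (hκ _ _ (hy₀ ▸ hxy))).imp Eq.symm (hκ _ _)
  · simp only [if_neg hx₀, if_neg hy₀]
    exact Or.inr hxy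

lemma abs_update_succ_sub_le {n : ℕ} {x y : Fin n → ℤ} {i : Fin n}
    (hxy : ∀ j, |x j - y j| ≤ 1) (hi : x i ≤ y i) (j : Fin n) :
    |Function.update x i (x i + 1) j - y j| ≤ 1 := by
  rcases eq_or_ne j i with rfl | hj
  · have := abs_le.mp (hxy j)
    rw [Function.update_self, abs_le]
    omega
  · rw [Function.update_of_ne hj]
    exact hxy j

theorem move_one_point_cn_continuous_general {n : ℕ} (a b : Fin n → ℤ)
    (X : Set (Fin n → ℤ)) (hX : X = {x | ∀ i, a i ≤ x i ∧ x i ≤ b i})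
    (x₀ : Fin n → ℤ) (i : Fin n) (hx₀i : x₀ i = a i) :
    DigCont (cAdj n n) (cAdj n n) X
      (fun x => if x = x₀ then Function.update x₀ i (x₀ i + 1) else x) := by
  refine DigCont.ite_eq (fun _ _ => cAdj.symm) fun y hy hadj => ?_
  rw [cAdj_iff_of_le le_rfl] at hadj
  have hi : x₀ i ≤ y i := by
    rw [hX] at hy
    exact hx₀i ▸ (hy i).1
  by_cases hmoved : Function.update x₀ i (x₀ i + 1) = y
  · exact Or.inl hmoved
  · exact Or.inr <| (cAdj_iff_of_le le_rfl).mpr ⟨hmoved, abs_update_succ_sub_le hadj.2 hi⟩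

/-- The map on a digital cube moving a single boundary point x₀ (with i-th
coordinate a_i) one unit in the i-th coordinate and fixing all other points is
c_n-continuous. -/
theorem move_one_point_cn_continuous {n : ℕ} (a b : Fin n → ℤ) (hab : ∀ i, a i < b i)
    (X : Set (Fin n → ℤ)) (hX : X = {x | ∀ i, a i ≤ x i ∧ x i ≤ b i})
    (x₀ : Fin n → ℤ) (hx₀ : x₀ ∈ X) (i : Fin n) (hx₀i : x₀ i = a i) :
    DigCont (cAdj n n) (cAdj n n) X
      (fun x => if x = x₀ then Function.update x₀ i (x₀ i + 1) else x) :=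
  move_one_point_cn_continuous_general a b X hX x₀ i hx₀i
end

section
/- Let X = ⋃_{i=1}^{m} K_i ⊆ ℤⁿ where each K_i = ∏_{j=1}^{n} [a_{ij}, b_{ij}] ∩ ℤⁿ is a digital cube, m ≥ 1, and X is c_n-connected. Let A = ⋃_{i=1}^{m} Bd(K_i). Then A is a freezing set for (X, c_n). -/
/-!
A `c_u`-continuous map moves each coordinate by at most one between adjacent points. On a
coordinate segment of a box whose two endpoints lie on opposite faces, the relevant coordinate
of a map fixing the boundary therefore agrees with the identity at both ends and can neither
run ahead of it nor fall behind it, so it is the identity along the whole segment. Every point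
of `X` lies in some cube, so a map fixing all the boundaries fixes `X`.
-/

open Function Set

section Interval

variable {f : ℤ → ℤ} {lo hi : ℤ}

theorem abs_sub_le_sub_of_abs_succ_sub_le_one
    (hf : ∀ c, lo ≤ c → c < hi → |f (c + 1) - f c| ≤ 1) {c d : ℤ}
    (hc : lo ≤ c) (hcd : c ≤ d) (hd : d ≤ hi) : |f d - f c| ≤ d - c := by
  induction d, hcd using Int.leInduction with
  | base => simp
  | succ d hcd ih =>
    calc |f (d + 1) - f c| ≤ |f (d + 1) - f d| + |f d - f c| := abs_sub_le _ _ _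
      _ ≤ 1 + (d - c) := add_le_add (hf d (hc.trans hcd) (by omega)) (ih (by omega))
      _ = d + 1 - c := by ring

theorem eq_self_of_abs_succ_sub_le_one
    (hf : ∀ c, lo ≤ c → c < hi → |f (c + 1) - f c| ≤ 1) (hlo : f lo = lo) (hhi : f hi = hi)
    {x : ℤ} (hx : x ∈ Icc lo hi) : f x = x := by
  have below := abs_sub_le_sub_of_abs_succ_sub_le_one hf le_rfl hx.1 hx.2
  have above := abs_sub_le_sub_of_abs_succ_sub_le_one hf hx.1 hx.2 le_rfl
  rw [hlo] at below
  rw [hhi] at above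
  have := (abs_le.mp below).2
  have := (abs_le.mp above).2
  omega

end Interval

theorem update_mem_Icc {ι α : Type*} [DecidableEq ι] [Preorder α] {x lo hi : ι → α}
    (hx : x ∈ Icc lo hi) (j : ι) {c : α} (hc : c ∈ Icc (lo j) (hi j)) :
    update x j c ∈ Icc lo hi :=
  ⟨le_update_iff.2 ⟨hc.1, fun k _ => hx.1 k⟩, update_le_iff.2 ⟨hc.2, fun k _ => hx.2 k⟩⟩

variable {n : ℕ}

theorem cAdj_update_update {u : ℕ} (hu : 1 ≤ u) (x : Fin n → ℤ) (j : Fin n) {c d : ℤ}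
    (hcd : |c - d| = 1) : cAdj n u (update x j c) (update x j d) := by
  refine ⟨fun h => ?_, fun k => ?_, ?_⟩
  · have := congrFun h j
    simp only [update_self] at this
    simp [this] at hcd
  · rcases eq_or_ne k j with rfl | hk
    · simp [hcd]
    · simp [update_of_ne hk]
  · refine le_trans (Finset.card_le_one.2 fun k hk l hl => ?_) hu
    simp only [Finset.mem_filter, Finset.mem_univ, true_and] at hk hl
    by_contra hkl
    rcases eq_or_ne k j with rfl | hk'
    · exact hl (by simp [update_of_ne (Ne.symm hkl)])
    · exact hk (by simp [update_of_ne hk'])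

theorem mem_Bd_of_update_notMem {S : Set (Fin n → ℤ)} {x : Fin n → ℤ} (hx : x ∈ S)
    {j : Fin n} {d : ℤ} (hd : update x j d ∉ S) (hxd : |x j - d| = 1) : x ∈ Bd n S := by
  refine ⟨hx, update x j d, hd, ?_⟩
  simpa using cAdj_update_update le_rfl x j (c := x j) hxd

theorem update_left_mem_Bd_Icc {x lo hi : Fin n → ℤ} (hx : x ∈ Icc lo hi) (j : Fin n) :
    update x j (lo j) ∈ Bd n (Icc lo hi) := by
  refine mem_Bd_of_update_notMem (j := j) (d := lo j - 1)
    (update_mem_Icc hx j ⟨le_rfl, (hx.1 j).trans (hx.2 j)⟩) (fun h => ?_) (by simp)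
  have := h.1 j
  simp at this

theorem update_right_mem_Bd_Icc {x lo hi : Fin n → ℤ} (hx : x ∈ Icc lo hi) (j : Fin n) :
    update x j (hi j) ∈ Bd n (Icc lo hi) := by
  refine mem_Bd_of_update_notMem (j := j) (d := hi j + 1)
    (update_mem_Icc hx j ⟨(hx.1 j).trans (hx.2 j), le_rfl⟩) (fun h => ?_) (by simp)
  have := h.2 j
  simp at this

namespace DigCont

variable {v w : ℕ} {X : Set (Fin n → ℤ)} {g : (Fin n → ℤ) → Fin n → ℤ}

theorem abs_sub_apply_le_one {α : Type*} {κ : α → α → Prop} {Y : Set α} {h : α → Fin n → ℤ}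
    (hh : DigCont κ (cAdj n w) Y h) {x y : α} (hx : x ∈ Y) (hy : y ∈ Y) (hxy : κ x y)
    (j : Fin n) : |h x j - h y j| ≤ 1 := by
  rcases hh x hx y hy hxy with hxy | hxy
  · simp [hxy]
  · rcases hxy.2.1 j with hj | hj
    · simp [hj]
    · exact hj.le

theorem apply_eq_self_of_eqOn_Bd_Icc (hg : DigCont (cAdj n v) (cAdj n w) X g) (hv : 1 ≤ v)
    {lo hi : Fin n → ℤ} (hX : Icc lo hi ⊆ X) (hfix : ∀ y ∈ Bd n (Icc lo hi), g y = y)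
    {x : Fin n → ℤ} (hx : x ∈ Icc lo hi) (j : Fin n) : g x j = x j := by
  have hline : ∀ c ∈ Icc (lo j) (hi j), update x j c ∈ X := fun c hc =>
    hX (update_mem_Icc hx j hc)
  have hfix_j : ∀ y ∈ Bd n (Icc lo hi), g y j = y j := fun y hy => congrFun (hfix y hy) j
  have key := eq_self_of_abs_succ_sub_le_one (f := fun c => g (update x j c) j)
    (fun c hc hc' => by
      simpa [abs_sub_comm] using hg.abs_sub_apply_le_one (hline c ⟨hc, hc'.le⟩)
        (hline (c + 1) ⟨by omega, hc'⟩) (cAdj_update_update hv x j (by simp)) j)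
    (by simpa using hfix_j _ (update_left_mem_Bd_Icc hx j))
    (by simpa using hfix_j _ (update_right_mem_Bd_Icc hx j)) ⟨hx.1 j, hx.2 j⟩
  simpa using key

end DigCont

theorem unionCubes_freezingSet_cn_general {n m : ℕ}
    (a b : Fin m → Fin n → ℤ)
    (K : Fin m → Set (Fin n → ℤ))
    (hK : ∀ i, K i = {x | ∀ j, a i j ≤ x j ∧ x j ≤ b i j})
    (X : Set (Fin n → ℤ)) (hX : X = ⋃ i, K i)
    (A : Set (Fin n → ℤ)) (hA : A = ⋃ i, Bd n (K i)) :
    FreezingSet (cAdj n n) X A := by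
  have hK_Icc : ∀ i, K i = Icc (a i) (b i) := fun i => by
    ext x
    simp [hK, Pi.le_def, forall_and]
  subst hX hA
  refine ⟨iUnion_mono fun i x hx => hx.1, fun g _ hg hfix x hx => ?_⟩
  obtain ⟨i, hxi⟩ := mem_iUnion.mp hx
  rw [hK_Icc] at hxi
  funext j
  exact hg.apply_eq_self_of_eqOn_Bd_Icc j.pos (hK_Icc i ▸ subset_iUnion K i)
    (fun y hy => hfix y (mem_iUnion_of_mem i (hK_Icc i ▸ hy))) hxi j

/-- The union of the boundaries of cubes decomposing a c_n-connected image X is a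
freezing set for (X, c_n). -/
theorem unionCubes_freezingSet_cn {n m : ℕ} (hm : 1 ≤ m)
    (a b : Fin m → Fin n → ℤ) (hab : ∀ i j, a i j ≤ b i j)
    (K : Fin m → Set (Fin n → ℤ))
    (hK : ∀ i, K i = {x | ∀ j, a i j ≤ x j ∧ x j ≤ b i j})
    (X : Set (Fin n → ℤ)) (hX : X = ⋃ i, K i)
    (hconn : DigConnected (cAdj n n) X)
    (A : Set (Fin n → ℤ)) (hA : A = ⋃ i, Bd n (K i)) :
    FreezingSet (cAdj n n) X A :=
  unionCubes_freezingSet_cn_general a b K hK X hX A hA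
end
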